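/- arXiv:1602.08801 — 7 statements merged into one kernel-verified Lean document; each statement's English description precedes it below -/
import Mathlib

section
/- For all real numbers x and α with 0 ≤ x ≤ 1 and 0 ≤ α ≤ 1, one has (1+x)^α ≤ 1 + (2^α − 1)·x^α. -/
/-! Since `t ↦ t ^ α` is concave on `[0, ∞)`, its increments over intervals of a fixed length
decrease as the interval moves right. Comparing `[1, 1 + x]` with `[x, 2x]`, which lies to its
left, gives `(1 + x) ^ α - 1 ≤ (2x) ^ α - x ^ α = (2 ^ α - 1) x ^ α`. -/

theorem ConcaveOn.map_add_sub_map_le_of_le {𝕜 β : Type*} [Field 𝕜] [LinearOrder 𝕜]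
    [IsStrictOrderedRing 𝕜] [AddCommGroup β] [PartialOrder β] [IsOrderedAddMonoid β]
    [Module 𝕜 β] {s : Set 𝕜} {f : 𝕜 → β} (hf : ConcaveOn 𝕜 s f) {a b c : 𝕜}
    (ha : a ∈ s) (hbc : b + c ∈ s) (hab : a ≤ b) (hc : 0 ≤ c) :
    f (b + c) - f b ≤ f (a + c) - f a := by
  rcases hab.eq_or_lt with rfl | hab
  · rfl
  -- `b` and `a + c` are the convex combinations of `a` and `b + c` with weights `μ, ν` and `ν, μ`.
  have hd : 0 < b + c - a := by linarith
  set μ := c / (b + c - a)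
  set ν := (b - a) / (b + c - a)
  have hμ : 0 ≤ μ := div_nonneg hc hd.le
  have hν : 0 ≤ ν := div_nonneg (sub_nonneg.2 hab.le) hd.le
  have hμν : μ + ν = 1 := by
    rw [← add_div, div_eq_one_iff_eq hd.ne']; ring
  have hb : μ • f a + ν • f (b + c) ≤ f b := by
    convert hf.2 ha hbc hμ hν hμν using 2
    simp only [smul_eq_mul, μ, ν]; field_simp; ring
  have hac : ν • f a + μ • f (b + c) ≤ f (a + c) := by
    convert hf.2 ha hbc hν hμ (by rw [add_comm, hμν]) using 2
    simp only [smul_eq_mul, μ, ν]; field_simp; ring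
  rw [sub_le_sub_iff]
  calc f (b + c) + f a
      = (μ • f a + ν • f (b + c)) + (ν • f a + μ • f (b + c)) := by
        rw [add_add_add_comm, ← add_smul, ← add_smul, add_comm ν, hμν, one_smul, one_smul,
          add_comm]
    _ ≤ f b + f (a + c) := add_le_add hb hac
    _ = f (a + c) + f b := add_comm _ _

theorem stmt_0 (x α : ℝ) (hx0 : 0 ≤ x) (hx1 : x ≤ 1) (hα0 : 0 ≤ α) (hα1 : α ≤ 1) :
    (1 + x) ^ α ≤ 1 + ((2 : ℝ) ^ α - 1) * x ^ α := by
  have h := (Real.concaveOn_rpow hα0 hα1).map_add_sub_map_le_of_le (a := x) (b := 1) (c := x)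
    hx0 (by simp only [Set.mem_Ici]; linarith) hx1 hx0
  rw [← two_mul, Real.mul_rpow zero_le_two hx0, Real.one_rpow] at h
  linarith
end

section
/- Let 0 < H < 1 and define μ(s,r) = (1/2)(s^{2H} + r^{2H} − (s−r)^{2H}) for 0 ≤ r ≤ s. Then (1/2)(2 − 2^H)·r^{2H}(s−r)^{2H} ≤ s^{2H} r^{2H} − μ(s,r)^2 ≤ 2 r^{2H} (s−r)^{2H} for all 0 ≤ r ≤ s. -/
private lemma rpow_concave_diff (H : ℝ) (hH0 : 0 < H) (hH1 : H ≤ 1) {a b c : ℝ}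
    (hb : 0 ≤ b) (hba : b ≤ a) (hc : 0 ≤ c) :
    (a + c) ^ H + b ^ H ≤ a ^ H + (b + c) ^ H := by
  have hconc := Real.concaveOn_rpow hH0.le hH1
  rcases eq_or_lt_of_le (show b ≤ a + c by linarith) with heq | hlt
  · have hc0 : c = 0 := by linarith
    have hab : a = b := by linarith
    simp [hc0, hab]
  · set d := a + c - b with hd
    have hd0 : 0 < d := by simp only [hd]; linarith
    have hl1 : 0 ≤ c / d := div_nonneg hc hd0.le
    have hl2 : 0 ≤ (a - b) / d := div_nonneg (by linarith) hd0.le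
    have hsum : c / d + (a - b) / d = 1 := by
      rw [← add_div, div_eq_one_iff_eq hd0.ne']
      simp [hd]; ring
    have hsum' : (a - b) / d + c / d = 1 := by linarith
    have hmem1 : (a + c) ∈ Set.Ici (0 : ℝ) := Set.mem_Ici.2 (by linarith)
    have hmem2 : b ∈ Set.Ici (0 : ℝ) := Set.mem_Ici.2 hb
    have hA1 := hconc.2 hmem1 hmem2 hl1 hl2 hsum
    have hA2 := hconc.2 hmem1 hmem2 hl2 hl1 hsum'
    simp only [smul_eq_mul] at hA1 hA2
    have hp1 : c / d * (a + c) + (a - b) / d * b = b + c := by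
      field_simp; ring
    have hp2 : (a - b) / d * (a + c) + c / d * b = a := by
      field_simp; ring
    rw [hp1] at hA1
    rw [hp2] at hA2
    have hcomb : (c / d + (a - b) / d) * ((a + c) ^ H) +
        ((a - b) / d + c / d) * (b ^ H) ≤ (b + c) ^ H + a ^ H := by
      nlinarith [hA1, hA2]
    rw [hsum, hsum'] at hcomb
    linarith

private lemma mul4_le {a b c d a' b' c' d' : ℝ} (ha : 0 ≤ a') (hb : 0 ≤ b') (hc : 0 ≤ c')
    (hd : 0 ≤ d') (h1 : a' ≤ a) (h2 : b' ≤ b) (h3 : c' ≤ c) (h4 : d' ≤ d) :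
    a' * b' * c' * d' ≤ a * b * c * d := by
  have hab : a' * b' ≤ a * b := mul_le_mul h1 h2 hb (ha.trans h1)
  have habn : 0 ≤ a' * b' := mul_nonneg ha hb
  have habc : a' * b' * c' ≤ a * b * c :=
    mul_le_mul hab h3 hc (le_trans habn hab)
  exact mul_le_mul habc h4 hd (le_trans (mul_nonneg habn hc) habc)

theorem stmt_2 (H : ℝ) (hH0 : 0 < H) (hH1 : H < 1) (r s : ℝ) (hr : 0 ≤ r) (hrs : r ≤ s) :
    (1 / 2) * (2 - (2 : ℝ) ^ H) * r ^ (2 * H) * (s - r) ^ (2 * H) ≤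
      s ^ (2 * H) * r ^ (2 * H) -
        ((1 / 2) * (s ^ (2 * H) + r ^ (2 * H) - (s - r) ^ (2 * H))) ^ 2 ∧
    s ^ (2 * H) * r ^ (2 * H) -
        ((1 / 2) * (s ^ (2 * H) + r ^ (2 * H) - (s - r) ^ (2 * H))) ^ 2 ≤
      2 * r ^ (2 * H) * (s - r) ^ (2 * H) := by
  have hs : 0 ≤ s := hr.trans hrs
  have hsr : 0 ≤ s - r := by linarith
  set X := s ^ H with hXdef
  set Y := r ^ H with hYdef
  set Z := (s - r) ^ H with hZdef
  have hX2 : s ^ (2 * H) = X ^ 2 := by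
    rw [hXdef, mul_comm, Real.rpow_mul hs, Real.rpow_two]
  have hY2 : r ^ (2 * H) = Y ^ 2 := by
    rw [hYdef, mul_comm, Real.rpow_mul hr, Real.rpow_two]
  have hZ2 : (s - r) ^ (2 * H) = Z ^ 2 := by
    rw [hZdef, mul_comm, Real.rpow_mul hsr, Real.rpow_two]
  have hY0 : 0 ≤ Y := Real.rpow_nonneg hr H
  have hZ0 : 0 ≤ Z := Real.rpow_nonneg hsr H
  have hX0 : 0 ≤ X := Real.rpow_nonneg hs H
  have hYX : Y ≤ X := Real.rpow_le_rpow hr hrs hH0.le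
  have hZX : Z ≤ X := Real.rpow_le_rpow hsr (by linarith) hH0.le
  have hsub : X ≤ Y + Z := by
    have h := rpow_concave_diff H hH0 hH1.le (a := s - r) (b := 0) (c := r)
      le_rfl hsr hr
    rw [Real.zero_rpow hH0.ne', zero_add] at h
    have : s - r + r = s := by ring
    rw [this] at h
    simpa [hXdef, hYdef, hZdef] using by linarith
  set K := (2 : ℝ) ^ H with hKdef
  have hK1 : 1 ≤ K := by
    have := Real.rpow_le_rpow_of_exponent_le (by norm_num : (1:ℝ) ≤ 2) hH0.le
    simpa [hKdef] using this
  have hK2 : K ≤ 2 := by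
    have := Real.rpow_le_rpow_of_exponent_le (by norm_num : (1:ℝ) ≤ 2) hH1.le
    simpa [hKdef] using this
  rw [hX2, hY2, hZ2]
  constructor
  · -- lower bound
    have hprod : 2 * (2 - K) * (Y ^ 2 * Z ^ 2) ≤
        (Y + Z - X) * (X + Z - Y) * (X + Y - Z) * (X + Y + Z) := by
      rcases le_total r (s - r) with hcase | hcase
      · -- r ≤ s - r, so Y ≤ Z, min = Y
        have hYZ : Y ≤ Z := Real.rpow_le_rpow hr hcase hH0.le
        have hkey : (2 - K) * Y ≤ Y + Z - X := by
          have h := rpow_concave_diff H hH0 hH1.le (a := s - r) (b := r) (c := r)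
            hr hcase hr
          have e1 : s - r + r = s := by ring
          have e2 : r + r = 2 * r := by ring
          rw [e1, e2] at h
          have e3 : (2 * r) ^ H = K * Y := by
            rw [Real.mul_rpow (by norm_num) hr]
          rw [e3] at h
          -- h : X + Y ≤ Z + K * Y
          nlinarith [h]
        calc 2 * (2 - K) * (Y ^ 2 * Z ^ 2) = ((2 - K) * Y) * Z * Y * (2 * Z) := by ring
          _ ≤ (Y + Z - X) * (X + Z - Y) * (X + Y - Z) * (X + Y + Z) := by
              apply mul4_le (mul_nonneg (by linarith) hY0) hZ0 hY0 (by linarith)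
                hkey (by linarith) (by linarith) (by linarith)
      · -- s - r ≤ r, so Z ≤ Y, min = Z
        have hZY : Z ≤ Y := Real.rpow_le_rpow hsr hcase hH0.le
        have hkey : (2 - K) * Z ≤ Y + Z - X := by
          have h := rpow_concave_diff H hH0 hH1.le (a := r) (b := s - r) (c := s - r)
            hsr hcase hsr
          have e1 : r + (s - r) = s := by ring
          have e2 : s - r + (s - r) = 2 * (s - r) := by ring
          rw [e1, e2] at h
          have e3 : (2 * (s - r)) ^ H = K * Z := by
            rw [Real.mul_rpow (by norm_num) hsr]
          rw [e3] at h
          nlinarith [h]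
        calc 2 * (2 - K) * (Y ^ 2 * Z ^ 2) = ((2 - K) * Z) * Z * Y * (2 * Y) := by ring
          _ ≤ (Y + Z - X) * (X + Z - Y) * (X + Y - Z) * (X + Y + Z) := by
              apply mul4_le (mul_nonneg (by linarith) hZ0) hZ0 hY0 (by linarith)
                hkey (by linarith) (by linarith) (by linarith)
    nlinarith [hprod]
  · -- upper bound
    nlinarith [sq_nonneg (Y ^ 2 + Z ^ 2 - X ^ 2), sq_nonneg (Y * Z), mul_nonneg hY0 hZ0]
end

section
/- Let 1/2 < H < 1. There exist constants 0 < c ≤ C (depending only on H) such that for all 0 < r < s, with μ = (1/2)(s^{2H} + r^{2H} − (s−r)^{2H}): c·(s−r)·r·s^{2H−2} ≤ μ − r^{2H} ≤ C·(s−r)·r·s^{2H−2}. -/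
/-!
With `q = 2H ∈ (1, 2)`, `μ - r^q` is half of `s^q - (s - r)^q - r^q`. The function
`x ↦ x^q - (x - r)^q` has derivative `q (x^(q-1) - (x - r)^(q-1))`, which by concavity of
`x ↦ x^(q-1)` is at least `q (q - 1) s^(q-2) r` on `[r, s]`; the mean value theorem on `[r, s]`
gives the lower bound.
For the upper bound, drop whichever of `r^q`, `(s - r)^q` belongs to the larger of `r`, `s - r`,
and bound the remaining difference of powers by the mean value theorem.
-/

lemma rpow_sub_rpow_le_mul_sub_of_one_le {a b q : ℝ} (ha : 0 ≤ a) (hab : a ≤ b) (hq : 1 ≤ q) :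
    b ^ q - a ^ q ≤ q * b ^ (q - 1) * (b - a) := by
  have hdiff := Real.differentiable_rpow_const hq
  refine (convex_Icc 0 b).image_sub_le_mul_sub_of_deriv_le hdiff.continuous.continuousOn
    hdiff.differentiableOn (fun x hx => ?_) a ⟨ha, hab⟩ b ⟨ha.trans hab, le_rfl⟩ hab
  rw [interior_Icc] at hx
  rw [Real.deriv_rpow_const]
  gcongr <;> linarith [hx.1, hx.2]

lemma mul_sub_le_rpow_sub_rpow_of_le_one {a b s p : ℝ} (ha : 0 ≤ a) (hab : a ≤ b) (hbs : b ≤ s)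
    (hp0 : 0 ≤ p) (hp1 : p ≤ 1) :
    p * s ^ (p - 1) * (b - a) ≤ b ^ p - a ^ p := by
  refine (convex_Icc a b).mul_sub_le_image_sub_of_le_deriv
    (Real.continuous_rpow_const hp0).continuousOn (fun x hx => ?_) (fun x hx => ?_)
    a ⟨le_rfl, hab⟩ b ⟨hab, le_rfl⟩ hab
  all_goals rw [interior_Icc] at hx
  · have hx0 : 0 < x := ha.trans_lt hx.1
    exact (Real.differentiableAt_rpow_const_of_ne p hx0.ne').differentiableWithinAt
  · have hx0 : 0 < x := ha.trans_lt hx.1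
    rw [Real.deriv_rpow_const]
    exact mul_le_mul_of_nonneg_left
      (Real.rpow_le_rpow_of_nonpos hx0 (hx.2.le.trans hbs) (by linarith)) hp0

lemma mul_le_rpow_sub_rpow_sub_rpow {r s q : ℝ} (hr : 0 ≤ r) (hrs : r ≤ s) (hq1 : 1 ≤ q)
    (hq2 : q ≤ 2) :
    q * (q - 1) * s ^ (q - 2) * r * (s - r) ≤ s ^ q - (s - r) ^ q - r ^ q := by
  have hderiv (x : ℝ) : HasDerivAt (fun x => x ^ q - (x - r) ^ q)
      (q * x ^ (q - 1) - q * (x - r) ^ (q - 1)) x := by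
    have hsub := (Real.hasDerivAt_rpow_const (x := x - r) (Or.inr hq1)).comp x
      ((hasDerivAt_id x).sub_const r)
    simpa using (Real.hasDerivAt_rpow_const (Or.inr hq1)).fun_sub hsub
  have hdiff : Differentiable ℝ fun x => x ^ q - (x - r) ^ q :=
    fun x => (hderiv x).differentiableAt
  have hmono := (convex_Icc r s).mul_sub_le_image_sub_of_le_deriv
    (C := q * ((q - 1) * s ^ (q - 2) * r)) hdiff.continuous.continuousOn hdiff.differentiableOn
    (fun x hx => ?_) r ⟨le_rfl, hrs⟩ s ⟨hrs, le_rfl⟩ hrs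
  · rw [sub_self, Real.zero_rpow (by linarith)] at hmono
    linarith
  rw [interior_Icc] at hx
  rw [(hderiv x).deriv, ← mul_sub]
  have hconc := mul_sub_le_rpow_sub_rpow_of_le_one (p := q - 1) (sub_nonneg.2 hx.1.le)
    (sub_le_self x hr) hx.2.le (by linarith) (by linarith)
  rw [sub_sub, one_add_one_eq_two, sub_sub_cancel] at hconc
  exact mul_le_mul_of_nonneg_left hconc (by linarith)

lemma rpow_sub_rpow_le_of_le_two_mul {a s q : ℝ} (ha : 0 < a) (has : a ≤ s) (hsa : s ≤ 2 * a)
    (hq : 1 ≤ q) :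
    s ^ q - a ^ q ≤ 2 * q * s ^ (q - 2) * a * (s - a) := by
  have hs : 0 < s := ha.trans_le has
  have hpow : s ^ (q - 1) = s ^ (q - 2) * s := by
    rw [← Real.rpow_add_one hs.ne']
    ring_nf
  calc s ^ q - a ^ q ≤ q * (s ^ (q - 2) * s) * (s - a) :=
        hpow ▸ rpow_sub_rpow_le_mul_sub_of_one_le ha.le has hq
    _ ≤ q * (s ^ (q - 2) * (2 * a)) * (s - a) := by gcongr
    _ = 2 * q * s ^ (q - 2) * a * (s - a) := by ring

lemma rpow_sub_rpow_sub_rpow_le {r s q : ℝ} (hr : 0 < r) (hrs : r < s) (hq : 1 ≤ q) :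
    s ^ q - (s - r) ^ q - r ^ q ≤ 2 * q * s ^ (q - 2) * r * (s - r) := by
  have hr_pow : 0 ≤ r ^ q := Real.rpow_nonneg hr.le q
  have hsr_pow : 0 ≤ (s - r) ^ q := Real.rpow_nonneg (sub_pos.2 hrs).le q
  rcases le_total s (2 * r) with hs | hs
  · linarith [rpow_sub_rpow_le_of_le_two_mul hr hrs.le hs hq]
  · have h := rpow_sub_rpow_le_of_le_two_mul (a := s - r) (s := s) (by linarith) (by linarith)
      (by linarith) hq
    rw [sub_sub_cancel] at h
    linarith

theorem stmt_3 (H : ℝ) (hH0 : 1 / 2 < H) (hH1 : H < 1) :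
    ∃ c C : ℝ, 0 < c ∧ c ≤ C ∧ ∀ r s : ℝ, 0 < r → r < s →
      c * (s - r) * r * s ^ (2 * H - 2) ≤
        (1 / 2) * (s ^ (2 * H) + r ^ (2 * H) - (s - r) ^ (2 * H)) - r ^ (2 * H) ∧
      (1 / 2) * (s ^ (2 * H) + r ^ (2 * H) - (s - r) ^ (2 * H)) - r ^ (2 * H) ≤
        C * (s - r) * r * s ^ (2 * H - 2) := by
  refine ⟨H * (2 * H - 1), 2 * H, by nlinarith, by nlinarith, fun r s hr hrs => ⟨?_, ?_⟩⟩
  · have h := mul_le_rpow_sub_rpow_sub_rpow (q := 2 * H) hr.le hrs.le (by linarith) (by linarith)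
    linarith
  · have h := rpow_sub_rpow_sub_rpow_le (q := 2 * H) hr hrs (by linarith)
    linarith
end

section
/- Let 1/2 < H < 1. There exists a constant C > 0 such that for all x ∈ [0,1]: (1/C)·x(1−x) ≤ 1 − x^{2H} − (1−x)^{2H} ≤ C·x(1−x). -/
/-!
Write `1 - x^p - (1-x)^p = (x - x^p) + ((1-x) - (1-x)^p)` with `p = 2H ∈ (1, 2)`. For `t ∈ [0, 1]`,
`t - t^p` is at most `t - t^2 = t(1-t)` since `p ≤ 2`, and at least `(p-1) t(1-t)` by Bernoulli's
inequality `t^(p-1) ≤ 1 + (p-1)(t-1)` for the concave power `p - 1 ∈ [0, 1]`. As `t(1-t)` is the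
same for `t = x` and `t = 1 - x`, both bounds follow with `C = 2/(2H-1)`.
-/

open Real

lemma sub_rpow_le_mul_one_sub {p t : ℝ} (hp : p ≤ 2) (ht0 : 0 ≤ t) (ht1 : t ≤ 1) :
    t - t ^ p ≤ t * (1 - t) := by
  rcases ht0.eq_or_lt with rfl | htpos
  · simpa using rpow_nonneg le_rfl p
  have hsq : t ^ (2 : ℝ) ≤ t ^ p := rpow_le_rpow_of_exponent_ge htpos ht1 hp
  rw [rpow_two] at hsq
  nlinarith

lemma mul_one_sub_le_sub_rpow {p t : ℝ} (hp1 : 1 ≤ p) (hp2 : p ≤ 2) (ht0 : 0 ≤ t) (ht1 : t ≤ 1) :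
    (p - 1) * (t * (1 - t)) ≤ t - t ^ p := by
  rcases ht0.eq_or_lt with rfl | htpos
  · simp [zero_rpow (by linarith : p ≠ 0)]
  have hbernoulli : t ^ (p - 1) ≤ 1 + (p - 1) * (t - 1) := by
    simpa using rpow_one_add_le_one_add_mul_self (s := t - 1) (by linarith)
      (p := p - 1) (by linarith) (by linarith)
  have hsplit : t ^ p = t * t ^ (p - 1) := by
    rw [← rpow_one_add' ht0 (by linarith)]
    ring_nf
  rw [hsplit]
  nlinarith [mul_le_mul_of_nonneg_left hbernoulli ht0]

lemma one_sub_rpow_sub_one_sub_rpow_mem_Icc {p x : ℝ} (hp1 : 1 ≤ p) (hp2 : p ≤ 2)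
    (hx0 : 0 ≤ x) (hx1 : x ≤ 1) :
    1 - x ^ p - (1 - x) ^ p ∈ Set.Icc (2 * (p - 1) * (x * (1 - x))) (2 * (x * (1 - x))) := by
  have hy0 : 0 ≤ 1 - x := by linarith
  have hy1 : 1 - x ≤ 1 := by linarith
  have lx := mul_one_sub_le_sub_rpow hp1 hp2 hx0 hx1
  have ly := mul_one_sub_le_sub_rpow hp1 hp2 hy0 hy1
  have ux := sub_rpow_le_mul_one_sub hp2 hx0 hx1
  have uy := sub_rpow_le_mul_one_sub hp2 hy0 hy1
  rw [sub_sub_cancel] at ly uy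
  constructor <;> nlinarith

theorem stmt_5 (H : ℝ) (hH0 : 1 / 2 < H) (hH1 : H < 1) :
    ∃ C : ℝ, 0 < C ∧ ∀ x : ℝ, 0 ≤ x → x ≤ 1 →
      (1 / C) * (x * (1 - x)) ≤ 1 - x ^ (2 * H) - (1 - x) ^ (2 * H) ∧
      1 - x ^ (2 * H) - (1 - x) ^ (2 * H) ≤ C * (x * (1 - x)) := by
  have ha : 0 < 2 * H - 1 := by linarith
  refine ⟨2 / (2 * H - 1), by positivity, fun x hx0 hx1 => ?_⟩
  obtain ⟨lower, upper⟩ :=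
    one_sub_rpow_sub_one_sub_rpow_mem_Icc (p := 2 * H) (by linarith) (by linarith) hx0 hx1
  have hxx : 0 ≤ x * (1 - x) := mul_nonneg hx0 (by linarith)
  have hinv : 1 / (2 / (2 * H - 1)) ≤ 2 * (2 * H - 1) := by
    rw [one_div_div]
    linarith
  have hC : 2 ≤ 2 / (2 * H - 1) := by
    rw [le_div_iff₀ ha]
    linarith
  exact ⟨(mul_le_mul_of_nonneg_right hinv hxx).trans lower,
    upper.trans (mul_le_mul_of_nonneg_right hC hxx)⟩
end

section
/- Let φ_{s,r}(x,y) = (1/(2πρ)) exp(−(r^{2H}x² − 2μxy + s^{2H}y²)/(2ρ²)) be a bivariate Gaussian density, where μ ∈ ℝ, s,r > 0 and ρ² = (sr)^{2H} − μ² > 0. Then for every β ∈ [0,1] and all x, y, z ∈ ℝ: |φ_{s,r}(x,y) − φ_{s,r}(z,y)| ≤ (r^{βH}/ρ^{1+β})·|x−z|^β·e^{−β y²/(2 r^{2H})}. -/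
/-!
With `a = r ^ H`, completing the square in `x` factors the density as
`φ(x, y) = (2πρ)⁻¹ · exp (-y² / (2a²)) · g ((a² x - μ y) / (ρ a))` with `g u = exp (-u² / 2)`.
Since `|g'(u)| = |u| e^{-u²/2} ≤ 1` and `0 < g ≤ 1`, the increment of `g` is at most
`min 1 |u - v| ≤ |u - v| ^ β`, and the Gaussian factor in `y` may be weakened to
`exp (-β y² / (2a²))`.
-/

open Real

lemma abs_mul_exp_neg_sq_div_two_le_one (t : ℝ) : |t| * exp (-t ^ 2 / 2) ≤ 1 := by
  have hexp : |t| ≤ exp (t ^ 2 / 2) := by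
    nlinarith [add_one_le_exp (t ^ 2 / 2), sq_nonneg (|t| - 1), sq_abs t]
  rw [neg_div, exp_neg, ← div_eq_mul_inv, div_le_one (exp_pos _)]
  exact hexp

lemma abs_exp_neg_sq_div_two_sub_le (u v : ℝ) :
    |exp (-u ^ 2 / 2) - exp (-v ^ 2 / 2)| ≤ |u - v| := by
  have hderiv (t : ℝ) :
      HasDerivAt (fun t : ℝ => exp (-t ^ 2 / 2)) (-t * exp (-t ^ 2 / 2)) t := by
    have hinner : HasDerivAt (fun t : ℝ => -t ^ 2 / 2) (-t) t :=
      ((hasDerivAt_pow 2 t).neg.div_const 2).congr_deriv (by ring)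
    simpa [mul_comm] using hinner.exp
  have hbound (t : ℝ) (_ : t ∈ Set.univ) : ‖-t * exp (-t ^ 2 / 2)‖ ≤ 1 := by
    rw [norm_mul, norm_neg, norm_of_nonneg (exp_pos _).le]
    exact abs_mul_exp_neg_sq_div_two_le_one t
  simpa using convex_univ.norm_image_sub_le_of_norm_hasDerivWithin_le
    (fun t _ => (hderiv t).hasDerivWithinAt) hbound (Set.mem_univ v) (Set.mem_univ u)

lemma abs_exp_neg_sq_div_two_sub_le_one (u v : ℝ) :
    |exp (-u ^ 2 / 2) - exp (-v ^ 2 / 2)| ≤ 1 := by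
  have hu : exp (-u ^ 2 / 2) ≤ 1 := exp_le_one_iff.mpr (by nlinarith [sq_nonneg u])
  have hv : exp (-v ^ 2 / 2) ≤ 1 := exp_le_one_iff.mpr (by nlinarith [sq_nonneg v])
  rw [abs_sub_le_iff]
  constructor <;> linarith [exp_pos (-u ^ 2 / 2), exp_pos (-v ^ 2 / 2)]

lemma le_rpow_of_le_of_le_one {d t β : ℝ} (hd0 : 0 ≤ d) (hd1 : d ≤ 1) (hdt : d ≤ t)
    (hβ0 : 0 ≤ β) (hβ1 : β ≤ 1) : d ≤ t ^ β :=
  calc d = d ^ (1 : ℝ) := (rpow_one d).symm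
    _ ≤ d ^ β := rpow_le_rpow_of_exponent_ge' hd0 hd1 hβ0 hβ1
    _ ≤ t ^ β := rpow_le_rpow hd0 hdt hβ0

lemma abs_exp_neg_sq_div_two_sub_le_rpow (u v : ℝ) {β : ℝ} (hβ0 : 0 ≤ β) (hβ1 : β ≤ 1) :
    |exp (-u ^ 2 / 2) - exp (-v ^ 2 / 2)| ≤ |u - v| ^ β :=
  le_rpow_of_le_of_le_one (abs_nonneg _) (abs_exp_neg_sq_div_two_sub_le_one u v)
    (abs_exp_neg_sq_div_two_sub_le u v) hβ0 hβ1

lemma neg_quadratic_div_eq_add_neg_sq {a ρ μ S x y : ℝ} (ha : a ≠ 0) (hρ : ρ ≠ 0)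
    (h : μ ^ 2 = S * a ^ 2 - ρ ^ 2) :
    -(a ^ 2 * x ^ 2 - 2 * μ * x * y + S * y ^ 2) / (2 * ρ ^ 2) =
      -y ^ 2 / (2 * a ^ 2) + -((a ^ 2 * x - μ * y) / (ρ * a)) ^ 2 / 2 := by
  field_simp
  linear_combination y ^ 2 * h

/-- Density of a centred Gaussian pair with variances `S`, `a ^ 2` and covariance `μ`, when
`ρ ^ 2 = S * a ^ 2 - μ ^ 2 > 0`. -/
noncomputable def bivariateGaussianDensity (a S μ ρ x y : ℝ) : ℝ :=
  1 / (2 * π * ρ) * exp (-(a ^ 2 * x ^ 2 - 2 * μ * x * y + S * y ^ 2) / (2 * ρ ^ 2))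

lemma bivariateGaussianDensity_eq {a S μ ρ : ℝ} (ha : a ≠ 0) (hρ : ρ ≠ 0)
    (hμ : μ ^ 2 = S * a ^ 2 - ρ ^ 2) (x y : ℝ) :
    bivariateGaussianDensity a S μ ρ x y =
      1 / (2 * π * ρ) * exp (-y ^ 2 / (2 * a ^ 2)) *
        exp (-((a ^ 2 * x - μ * y) / (ρ * a)) ^ 2 / 2) := by
  rw [bivariateGaussianDensity, neg_quadratic_div_eq_add_neg_sq ha hρ hμ, exp_add,
    ← mul_assoc]

lemma abs_bivariateGaussianDensity_sub_le {a S μ ρ : ℝ} (ha : 0 < a) (hρ : 0 < ρ)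
    (hμ : μ ^ 2 = S * a ^ 2 - ρ ^ 2) {β : ℝ} (hβ0 : 0 ≤ β) (hβ1 : β ≤ 1) (x y z : ℝ) :
    |bivariateGaussianDensity a S μ ρ x y - bivariateGaussianDensity a S μ ρ z y| ≤
      1 / ρ * (a / ρ * |x - z|) ^ β * exp (-β * y ^ 2 / (2 * a ^ 2)) := by
  set u : ℝ → ℝ := fun w => (a ^ 2 * w - μ * y) / (ρ * a)
  have hu : |u x - u z| = a / ρ * |x - z| := by
    rw [← abs_of_pos (div_pos ha hρ), ← abs_mul]
    congr 1
    simp only [u]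
    field_simp
    ring
  have hexp : exp (-y ^ 2 / (2 * a ^ 2)) ≤ exp (-β * y ^ 2 / (2 * a ^ 2)) := by
    gcongr
    nlinarith [mul_nonneg (sub_nonneg.mpr hβ1) (sq_nonneg y)]
  have hπρ : 1 / (2 * π * ρ) ≤ 1 / ρ := by
    gcongr
    nlinarith [pi_gt_three]
  calc _ = 1 / (2 * π * ρ) * exp (-y ^ 2 / (2 * a ^ 2)) *
            |exp (-u x ^ 2 / 2) - exp (-u z ^ 2 / 2)| := by
          rw [bivariateGaussianDensity_eq ha.ne' hρ.ne' hμ,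
            bivariateGaussianDensity_eq ha.ne' hρ.ne' hμ, ← mul_sub, abs_mul,
            abs_of_pos (by positivity)]
    _ ≤ 1 / ρ * exp (-β * y ^ 2 / (2 * a ^ 2)) * (a / ρ * |x - z|) ^ β := by
          rw [← hu]
          gcongr
          exact abs_exp_neg_sq_div_two_sub_le_rpow _ _ hβ0 hβ1
    _ = _ := by ring

theorem stmt_7 (H s r μ ρ : ℝ) (hs : 0 < s) (hr : 0 < r) (hρ : 0 < ρ)
    (hρ2 : ρ ^ 2 = (s * r) ^ (2 * H) - μ ^ 2)
    (φ : ℝ → ℝ → ℝ)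
    (hφ : ∀ x y : ℝ, φ x y =
      (1 / (2 * π * ρ)) *
        Real.exp (-(r ^ (2 * H) * x ^ 2 - 2 * μ * x * y + s ^ (2 * H) * y ^ 2) / (2 * ρ ^ 2)))
    (β : ℝ) (hβ0 : 0 ≤ β) (hβ1 : β ≤ 1) (x y z : ℝ) :
    |φ x y - φ z y| ≤
      (r ^ (β * H) / ρ ^ (1 + β)) * |x - z| ^ β * Real.exp (-β * y ^ 2 / (2 * r ^ (2 * H))) := by
  set a := r ^ H
  have ha : 0 < a := rpow_pos_of_pos hr H
  have hr2 : r ^ (2 * H) = a ^ 2 := by rw [mul_comm, rpow_mul hr.le, rpow_two]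
  have hμ : μ ^ 2 = s ^ (2 * H) * a ^ 2 - ρ ^ 2 := by
    rw [← hr2, ← mul_rpow hs.le hr.le]; linarith
  have hφa (w : ℝ) : φ w y = bivariateGaussianDensity a (s ^ (2 * H)) μ ρ w y := by
    rw [hφ, hr2, bivariateGaussianDensity]
  rw [hφa, hφa]
  calc _ ≤ 1 / ρ * (a / ρ * |x - z|) ^ β * exp (-β * y ^ 2 / (2 * a ^ 2)) :=
        abs_bivariateGaussianDensity_sub_le ha hρ hμ hβ0 hβ1 x y z
    _ = _ := by
        rw [mul_rpow (by positivity) (abs_nonneg _), div_rpow ha.le hρ.le, rpow_add hρ,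
          rpow_one, mul_comm β H, rpow_mul hr.le, hr2]
        field_simp
        ring
end

section
/- Let F₊(x) = x log x − x for x > 0 and F₊(x) = 0 for x ≤ 0, and let F_ε be the C¹ approximation defined piecewise as: F_ε(x) = 0 for x ≤ 0, F_ε(x) = x²(log ε)/(2ε) for 0 < x ≤ ε, and F_ε(x) = ε − (ε log ε)/2 + x log x − x for x > ε. Then for every ε ∈ (0,1) and all x ∈ ℝ: |F₊(x) − F_ε(x)| ≤ ε − (ε log ε)/2. -/
/-!
Above `ε` the two functions differ by the constant `ε - ε log ε / 2`. On `(0, ε]` the difference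
`x log x - x - x² log ε / (2ε)` is at most `-ε log ε / 2`, since `x log x - x ≤ 0` and `x² ≤ ε²`;
it is at least `-ε + ε log ε / 2` by the tangent-line bound `x log x - x ≥ x log ε - ε`, because
`x - x² / (2ε) - ε / 2 = -(x - ε)² / (2ε) ≤ 0` and `log ε < 0`.
-/

open Real

lemma mul_log_sub_le_mul_log_sub {x y : ℝ} (hx : 0 < x) (hy : 0 < y) :
    x * log y - y ≤ x * log x - x := by
  have hlog : log (y / x) ≤ y / x - 1 := log_le_sub_one_of_pos (div_pos hy hx)
  rw [log_div hy.ne' hx.ne'] at hlog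
  have hscaled : x * (log y - log x) ≤ x * (y / x - 1) := mul_le_mul_of_nonneg_left hlog hx.le
  have : x * (y / x - 1) = y - x := by field_simp
  linarith

section SmallArgument

variable {x ε : ℝ} (hx : 0 < x) (hxε : x ≤ ε) (hε1 : ε < 1)
include hx hxε hε1

lemma mul_log_sub_sub_sq_mul_log_le :
    x * log x - x - x ^ 2 * log ε / (2 * ε) ≤ -(ε * log ε / 2) := by
  have hε : 0 < ε := hx.trans_le hxε
  have hlogε : log ε < 0 := log_neg hε hε1
  have hxlogx : x * log x ≤ 0 := mul_log_nonpos hx.le (by linarith)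
  have hsq : ε ^ 2 * log ε / (2 * ε) ≤ x ^ 2 * log ε / (2 * ε) :=
    div_le_div_of_nonneg_right
      (mul_le_mul_of_nonpos_right (pow_le_pow_left₀ hx.le hxε 2) hlogε.le) (by positivity)
  have : ε ^ 2 * log ε / (2 * ε) = ε * log ε / 2 := by field_simp
  linarith

lemma neg_le_mul_log_sub_sub_sq_mul_log :
    -(ε - ε * log ε / 2) ≤ x * log x - x - x ^ 2 * log ε / (2 * ε) := by
  have hε : 0 < ε := hx.trans_le hxε
  have hlogε : log ε < 0 := log_neg hε hε1
  have htangent := mul_log_sub_le_mul_log_sub hx hε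
  have hgap : log ε * (x - ε) ^ 2 / (2 * ε) ≤ 0 :=
    div_nonpos_of_nonpos_of_nonneg (mul_nonpos_of_nonpos_of_nonneg hlogε.le (sq_nonneg _))
      (by positivity)
  have : x * log ε - ε - x ^ 2 * log ε / (2 * ε) + (ε - ε * log ε / 2)
      = -(log ε * (x - ε) ^ 2 / (2 * ε)) := by
    field_simp
    ring
  linarith

end SmallArgument

theorem stmt_13 (ε : ℝ) (hε0 : 0 < ε) (hε1 : ε < 1)
    (Fp Fε : ℝ → ℝ)
    (hFp : ∀ x : ℝ, Fp x = if x ≤ 0 then 0 else x * Real.log x - x)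
    (hF : ∀ x : ℝ, Fε x =
      if x ≤ 0 then 0
      else if x ≤ ε then x ^ 2 * Real.log ε / (2 * ε)
      else ε - ε * Real.log ε / 2 + x * Real.log x - x) :
    ∀ x : ℝ, |Fp x - Fε x| ≤ ε - ε * Real.log ε / 2 := by
  intro x
  have hbound : 0 ≤ ε - ε * log ε / 2 := by
    nlinarith [log_neg hε0 hε1]
  rw [hFp x, hF x]
  split_ifs with hx0 hxε
  · simpa using hbound
  · have hx : 0 < x := lt_of_not_ge hx0
    rw [abs_le]
    exact ⟨neg_le_mul_log_sub_sub_sq_mul_log hx hxε hε1,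
      (mul_log_sub_sub_sq_mul_log_le hx hxε hε1).trans (by linarith)⟩
  · rw [show x * log x - x - (ε - ε * log ε / 2 + x * log x - x) = -(ε - ε * log ε / 2) by ring,
      abs_neg, abs_of_nonneg hbound]
end

section
/- With ζ_n and G_n as in the previous statement, the derivatives satisfy: G_n'(x) = 0 for x ≤ 0, and there is a constant C > 0 (independent of n) such that |G_n'(x)| ≤ C·x^{−1}(1 + |log x|) for all x > 0 and n ≥ 2; moreover G_n'(x) → 1/x for every x > 0 as n → ∞. -/
/-!
Write `G_n = F ⋆ ζ_n` with `F = (Ioi 0).indicator log`, so that `G_n' = F ⋆ ζ_n'`, where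
`ζ_n = n ζ(n ·)` is supported in `(0, 2/n)`.
For `0 < x ≤ 4/n` we use `|ζ_n'| ≤ K n² ≤ 16 K / x²` (with `K = sup |ζ'|`) and
`∫_0^x |log| ≤ 3x(1 + |log x|)`.
For `x > 2/n`, integrating by parts gives `G_n'(x) = ∫ ζ_n(s) / (x - s) ds`, an average of
`1 / (x - s)` over `s ∈ (0, 2/n)`; hence `1/x ≤ G_n'(x) ≤ 1/(x - 2/n)`, which yields both the
bound for `x > 4/n` and the limit `1/x`.
-/

open Filter MeasureTheory Set Real Function
open scoped Convolution Topology

lemma locallyIntegrable_indicator_log : LocallyIntegrable ((Ioi (0 : ℝ)).indicator log) := by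
  have hlog : LocallyIntegrable log := fun x =>
    ⟨Icc (x - 1) (x + 1), Icc_mem_nhds (by linarith) (by linarith),
      (intervalIntegrable_iff_integrableOn_Icc_of_le (by linarith)).1
        intervalIntegral.intervalIntegrable_log'⟩
  exact hlog.indicator measurableSet_Ioi

lemma indicator_log_of_nonneg {y : ℝ} (hy : 0 ≤ y) : (Ioi 0).indicator log y = log y := by
  rcases hy.eq_or_lt with rfl | hy
  · simp
  · exact indicator_of_mem hy _

lemma integral_abs_log_le {x : ℝ} (hx : 0 < x) :
    ∫ t in 0..x, |log t| ≤ 3 * x * (1 + |log x|) := by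
  have hle : ∀ t ∈ Icc 0 x, |log t| ≤ -log t + 2 * |log x| := by
    intro t ht
    rcases le_or_gt (log t) 0 with h | h
    · rw [abs_of_nonpos h]
      linarith [abs_nonneg (log x)]
    · have ht0 : 0 < t := ht.1.lt_of_ne (by rintro rfl; simp at h)
      rw [abs_of_pos h]
      linarith [log_le_log ht0 ht.2, le_abs_self (log x)]
  have hneg : IntervalIntegrable (fun t => -log t) volume 0 x :=
    intervalIntegral.intervalIntegrable_log'.neg
  calc ∫ t in 0..x, |log t| ≤ ∫ t in 0..x, (-log t + 2 * |log x|) :=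
        intervalIntegral.integral_mono_on hx.le intervalIntegral.intervalIntegrable_log'.abs
          (hneg.add intervalIntegrable_const) hle
    _ = x - x * log x + 2 * x * |log x| := by
        rw [intervalIntegral.integral_add hneg intervalIntegrable_const,
          intervalIntegral.integral_neg, integral_log, intervalIntegral.integral_const]
        simp only [log_zero, mul_zero, sub_zero, add_zero, smul_eq_mul]
        ring
    _ ≤ 3 * x * (1 + |log x|) := by nlinarith [neg_abs_le (log x), abs_nonneg (log x)]

noncomputable def mollifiedLog (φ : ℝ → ℝ) : ℝ → ℝ :=
  (Ioi 0).indicator log ⋆[ContinuousLinearMap.mul ℝ ℝ] φ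

section Mollifier

variable {φ : ℝ → ℝ} {δ : ℝ}

lemma deriv_eq_zero_of_notMem_Icc (hsupp : support φ ⊆ Ioo 0 δ) {s : ℝ}
    (hs : s ∉ Icc 0 δ) : deriv φ s = 0 :=
  notMem_support.1 fun h =>
    hs (closure_minimal (hsupp.trans Ioo_subset_Icc_self) isClosed_Icc (support_deriv_subset h))

lemma hasDerivAt_mollifiedLog (hφ : ContDiff ℝ 1 φ) (hφc : HasCompactSupport φ) (x : ℝ) :
    HasDerivAt (mollifiedLog φ) (∫ s, (Ioi 0).indicator log (x - s) * deriv φ s) x := by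
  refine (hφc.hasDerivAt_convolution_right (ContinuousLinearMap.mul ℝ ℝ)
    locallyIntegrable_indicator_log hφ x).congr_deriv ?_
  rw [convolution_mul, ← integral_sub_left_eq_self _ volume x]
  simp only [sub_sub_cancel]

lemma hasCompactSupport_of_support_subset_Ioo (hsupp : support φ ⊆ Ioo 0 δ) :
    HasCompactSupport φ :=
  isCompact_Icc.of_isClosed_subset (isClosed_tsupport φ)
    (closure_minimal (hsupp.trans Ioo_subset_Icc_self) isClosed_Icc)

lemma deriv_mollifiedLog_of_nonpos (hφ : ContDiff ℝ 1 φ) (hsupp : support φ ⊆ Ioo 0 δ) {x : ℝ}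
    (hx : x ≤ 0) : deriv (mollifiedLog φ) x = 0 := by
  rw [(hasDerivAt_mollifiedLog hφ (hasCompactSupport_of_support_subset_Ioo hsupp) x).deriv]
  refine integral_eq_zero_of_ae (Eventually.of_forall fun s => ?_)
  rcases lt_or_ge s 0 with hs | hs
  · simp [deriv_eq_zero_of_notMem_Icc hsupp fun h => (h.1.trans_lt hs).false]
  · simp [indicator_of_notMem (show x - s ∉ Ioi 0 from fun h => by simp at h; linarith)]

lemma deriv_mollifiedLog_eq_intervalIntegral (hφ : ContDiff ℝ 1 φ) (hsupp : support φ ⊆ Ioo 0 δ)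
    {x b : ℝ} (hb0 : 0 ≤ b) (hbx : b ≤ x) (hb : min x δ ≤ b) :
    deriv (mollifiedLog φ) x = ∫ s in 0..b, log (x - s) * deriv φ s := by
  rw [(hasDerivAt_mollifiedLog hφ (hasCompactSupport_of_support_subset_Ioo hsupp) x).deriv,
    intervalIntegral.integral_of_le hb0, ← integral_Icc_eq_integral_Ioc,
    ← setIntegral_eq_integral_of_forall_compl_eq_zero (s := Icc 0 b)]
  · refine setIntegral_congr_fun measurableSet_Icc fun s hs => ?_
    rw [indicator_log_of_nonneg (by linarith [hs.2])]
  · intro s hs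
    rcases lt_or_ge s 0 with hs0 | hs0
    · simp [deriv_eq_zero_of_notMem_Icc hsupp fun h => (h.1.trans_lt hs0).false]
    have hbs : min x δ < s := hb.trans_lt (lt_of_not_ge fun h => hs ⟨hs0, h⟩)
    rcases min_lt_iff.1 hbs with hxs | hδs
    · simp [indicator_of_notMem (show x - s ∉ Ioi 0 from fun h => by simp at h; linarith)]
    · simp [deriv_eq_zero_of_notMem_Icc hsupp fun h => (h.2.trans_lt hδs).false]

lemma abs_deriv_mollifiedLog_le (hφ : ContDiff ℝ 1 φ) (hsupp : support φ ⊆ Ioo 0 δ) {M : ℝ}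
    (hM : ∀ s, |deriv φ s| ≤ M) {x : ℝ} (hx : 0 < x) :
    |deriv (mollifiedLog φ) x| ≤ M * (3 * x * (1 + |log x|)) := by
  have hlog : IntervalIntegrable (fun s => |log (x - s)|) volume 0 x := by
    simpa using (intervalIntegral.intervalIntegrable_log' (a := x) (b := 0)).abs.comp_sub_left x
  rw [deriv_mollifiedLog_eq_intervalIntegral hφ hsupp hx.le le_rfl (min_le_left _ _)]
  calc |∫ s in 0..x, log (x - s) * deriv φ s| ≤ ∫ s in 0..x, M * |log (x - s)| := by
        rw [← Real.norm_eq_abs]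
        refine intervalIntegral.norm_integral_le_of_norm_le hx.le
          (Eventually.of_forall fun s _ => ?_) (hlog.const_mul M)
        rw [Real.norm_eq_abs, abs_mul, mul_comm]
        exact mul_le_mul_of_nonneg_right (hM s) (abs_nonneg _)
    _ = M * ∫ t in 0..x, |log t| := by
        rw [intervalIntegral.integral_const_mul,
          intervalIntegral.integral_comp_sub_left (fun t : ℝ => |log t|) x]
        simp
    _ ≤ M * (3 * x * (1 + |log x|)) :=
        mul_le_mul_of_nonneg_left (integral_abs_log_le hx) ((abs_nonneg _).trans (hM 0))

lemma deriv_mollifiedLog_eq_integral_div (hφ : ContDiff ℝ 1 φ) (hsupp : support φ ⊆ Ioo 0 δ)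
    (hδ : 0 ≤ δ) {x : ℝ} (hx : δ < x) :
    deriv (mollifiedLog φ) x = ∫ s in 0..δ, φ s / (x - s) := by
  have hxs : ∀ s ∈ uIcc 0 δ, x - s ≠ 0 := fun s hs => by
    rw [uIcc_of_le hδ] at hs
    linarith [hs.2]
  have hφ0 : φ 0 = 0 := notMem_support.1 fun h => (hsupp h).1.false
  have hφδ : φ δ = 0 := notMem_support.1 fun h => (hsupp h).2.false
  rw [deriv_mollifiedLog_eq_intervalIntegral hφ hsupp hδ hx.le (min_le_right _ _),
    intervalIntegral.integral_mul_deriv_eq_deriv_mul (u := fun s => log (x - s))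
      (u' := fun s => -1 / (x - s))
      (fun s hs => ((hasDerivAt_id' s).const_sub x).log (hxs s hs))
      (fun s _ => (hφ.differentiable one_ne_zero s).hasDerivAt)
      (ContinuousOn.intervalIntegrable (by fun_prop (disch := exact hxs)))
      ((hφ.continuous_deriv le_rfl).intervalIntegrable _ _),
    hφ0, hφδ, mul_zero, mul_zero, sub_zero, zero_sub, ← intervalIntegral.integral_neg]
  congr 1 with s
  ring

lemma deriv_mollifiedLog_mem_Icc (hφ : ContDiff ℝ 1 φ) (hsupp : support φ ⊆ Ioo 0 δ)
    (hφ0 : 0 ≤ φ) (hφ1 : ∫ s, φ s = 1) (hδ : 0 ≤ δ) {x : ℝ} (hx : δ < x) :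
    deriv (mollifiedLog φ) x ∈ Icc x⁻¹ (x - δ)⁻¹ := by
  have hmass : ∫ s in 0..δ, φ s = 1 := by
    rw [intervalIntegral.integral_of_le hδ, setIntegral_eq_integral_of_forall_compl_eq_zero
      fun s hs => notMem_support.1 fun h => hs (Ioo_subset_Ioc_self (hsupp h)), hφ1]
  have hpos : ∀ s ∈ uIcc 0 δ, 0 < x - s := fun s hs => by
    rw [uIcc_of_le hδ] at hs
    linarith [hs.2]
  have hcont : Continuous φ := hφ.continuous
  have hquot : IntervalIntegrable (fun s => φ s / (x - s)) volume 0 δ :=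
    ContinuousOn.intervalIntegrable (by fun_prop (disch := exact fun s hs => (hpos s hs).ne'))
  have hmul : ∀ c : ℝ, IntervalIntegrable (fun s => φ s * c) volume 0 δ := fun c =>
    (hcont.mul continuous_const).intervalIntegrable _ _
  rw [deriv_mollifiedLog_eq_integral_div hφ hsupp hδ hx]
  constructor
  · calc x⁻¹ = ∫ s in 0..δ, φ s * x⁻¹ := by rw [intervalIntegral.integral_mul_const, hmass, one_mul]
      _ ≤ ∫ s in 0..δ, φ s / (x - s) := by
        refine intervalIntegral.integral_mono_on hδ (hmul _) hquot fun s hs => ?_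
        rw [div_eq_mul_inv]
        exact mul_le_mul_of_nonneg_left
          (inv_anti₀ (hpos s (Icc_subset_uIcc hs)) (by linarith [hs.1])) (hφ0 s)
  · calc ∫ s in 0..δ, φ s / (x - s) ≤ ∫ s in 0..δ, φ s * (x - δ)⁻¹ := by
          refine intervalIntegral.integral_mono_on hδ hquot (hmul _) fun s hs => ?_
          rw [div_eq_mul_inv]
          exact mul_le_mul_of_nonneg_left (inv_anti₀ (by linarith) (by linarith [hs.2])) (hφ0 s)
      _ = (x - δ)⁻¹ := by rw [intervalIntegral.integral_mul_const, hmass, one_mul]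

end Mollifier

section Rescale

variable {φ : ℝ → ℝ} {δ : ℝ}

lemma contDiff_rescale (hφ : ContDiff ℝ 1 φ) (n : ℝ) : ContDiff ℝ 1 fun y => n * φ (n * y) :=
  contDiff_const.mul (hφ.comp (contDiff_const.mul contDiff_id))

lemma support_rescale_subset (hsupp : support φ ⊆ Ioo 0 δ) {n : ℝ} (hn : 0 < n) :
    support (fun y => n * φ (n * y)) ⊆ Ioo 0 (δ / n) := fun y hy => by
  have h := hsupp (right_ne_zero_of_mul hy)
  exact ⟨pos_of_mul_pos_right h.1 hn.le, (lt_div_iff₀ hn).2 (by linarith [h.2])⟩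

lemma integral_rescale {n : ℝ} (hn : 0 < n) : ∫ y, n * φ (n * y) = ∫ s, φ s := by
  rw [integral_const_mul, Measure.integral_comp_mul_left, abs_of_pos (inv_pos.2 hn), smul_eq_mul,
    mul_inv_cancel_left₀ hn.ne']

lemma abs_deriv_rescale_le (hφ : ContDiff ℝ 1 φ) {K : ℝ} (hK : ∀ s, |deriv φ s| ≤ K) (n y : ℝ) :
    |deriv (fun y => n * φ (n * y)) y| ≤ n ^ 2 * K := by
  have h : HasDerivAt (fun y => n * φ (n * y)) (n * (deriv φ (n * y) * (n * 1))) y :=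
    (((hφ.differentiable one_ne_zero) (n * y)).hasDerivAt.comp y
      ((hasDerivAt_id' y).const_mul n)).const_mul n
  rw [h.deriv, show n * (deriv φ (n * y) * (n * 1)) = n ^ 2 * deriv φ (n * y) by ring, abs_mul,
    abs_of_nonneg (sq_nonneg n)]
  exact mul_le_mul_of_nonneg_left (hK _) (sq_nonneg n)

lemma deriv_mollifiedLog_rescale_mem_Icc (hφ : ContDiff ℝ 1 φ) (hsupp : support φ ⊆ Ioo 0 δ)
    (hφ0 : 0 ≤ φ) (hφ1 : ∫ s, φ s = 1) (hδ : 0 ≤ δ) {n x : ℝ} (hn : 0 < n) (hx : δ / n < x) :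
    deriv (mollifiedLog fun y => n * φ (n * y)) x ∈ Icc x⁻¹ (x - δ / n)⁻¹ :=
  deriv_mollifiedLog_mem_Icc (contDiff_rescale hφ n) (support_rescale_subset hsupp hn)
    (fun y => mul_nonneg hn.le (hφ0 _)) (by rw [integral_rescale hn, hφ1])
    (div_nonneg hδ hn.le) hx

theorem exists_abs_deriv_mollifiedLog_rescale_le (hφ : ContDiff ℝ 1 φ)
    (hsupp : support φ ⊆ Ioo 0 δ) (hφ0 : 0 ≤ φ) (hφ1 : ∫ s, φ s = 1) (hδ : 0 ≤ δ) :
    ∃ C, 0 < C ∧ ∀ n : ℝ, 0 < n → ∀ x : ℝ, 0 < x →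
      |deriv (mollifiedLog fun y => n * φ (n * y)) x| ≤ C * x⁻¹ * (1 + |log x|) := by
  obtain ⟨K, hK⟩ := (hasCompactSupport_of_support_subset_Ioo hsupp).deriv
    |>.exists_bound_of_continuous (hφ.continuous_deriv le_rfl)
  have hK0 : 0 ≤ K := (norm_nonneg _).trans (hK 0)
  refine ⟨12 * δ ^ 2 * K + 2, by positivity, fun n hn x hx => ?_⟩
  have hx' : x⁻¹ ≤ x⁻¹ * (1 + |log x|) :=
    le_mul_of_one_le_right (inv_pos.2 hx).le (by linarith [abs_nonneg (log x)])
  have hP : 0 ≤ x⁻¹ * (1 + |log x|) := (inv_pos.2 hx).le.trans hx'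
  rw [mul_assoc]
  rcases le_or_gt x (2 * δ / n) with hsmall | hlarge
  · have hnx : n * x ≤ 2 * δ := by rw [le_div_iff₀ hn] at hsmall; linarith
    calc |deriv (mollifiedLog fun y => n * φ (n * y)) x|
        ≤ n ^ 2 * K * (3 * x * (1 + |log x|)) :=
          abs_deriv_mollifiedLog_le (contDiff_rescale hφ n) (support_rescale_subset hsupp hn)
            (abs_deriv_rescale_le hφ hK n) hx
      _ = 3 * K * (n * x) ^ 2 * (x⁻¹ * (1 + |log x|)) := by field_simp
      _ ≤ 3 * K * (2 * δ) ^ 2 * (x⁻¹ * (1 + |log x|)) := by gcongr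
      _ ≤ (12 * δ ^ 2 * K + 2) * (x⁻¹ * (1 + |log x|)) :=
          mul_le_mul_of_nonneg_right (by linarith) hP
  · have hδn : δ / n < x / 2 := by rw [mul_div_assoc] at hlarge; linarith
    obtain ⟨hlow, hup⟩ :=
      deriv_mollifiedLog_rescale_mem_Icc hφ hsupp hφ0 hφ1 hδ hn (show δ / n < x by linarith)
    calc |deriv (mollifiedLog fun y => n * φ (n * y)) x|
        = deriv (mollifiedLog fun y => n * φ (n * y)) x :=
          abs_of_pos ((inv_pos.2 hx).trans_le hlow)
      _ ≤ (x / 2)⁻¹ := hup.trans (inv_anti₀ (by positivity) (by linarith))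
      _ = 2 * x⁻¹ := by rw [inv_div, div_eq_mul_inv]
      _ ≤ (12 * δ ^ 2 * K + 2) * (x⁻¹ * (1 + |log x|)) := by
          nlinarith [mul_nonneg (by positivity : 0 ≤ 12 * δ ^ 2 * K) hP]

theorem tendsto_deriv_mollifiedLog_rescale (hφ : ContDiff ℝ 1 φ) (hsupp : support φ ⊆ Ioo 0 δ)
    (hφ0 : 0 ≤ φ) (hφ1 : ∫ s, φ s = 1) (hδ : 0 ≤ δ) {x : ℝ} (hx : 0 < x) :
    Tendsto (fun n : ℝ => deriv (mollifiedLog fun y => n * φ (n * y)) x) atTop (𝓝 x⁻¹) := by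
  have hupper : Tendsto (fun n : ℝ => (x - δ / n)⁻¹) atTop (𝓝 x⁻¹) := by
    simpa using ((tendsto_const_nhds.div_atTop tendsto_id).const_sub x).inv₀ (by simpa using hx.ne')
  have hmem : ∀ᶠ n : ℝ in atTop,
      deriv (mollifiedLog fun y => n * φ (n * y)) x ∈ Icc x⁻¹ (x - δ / n)⁻¹ := by
    filter_upwards [eventually_gt_atTop 0, eventually_gt_atTop (δ / x)] with n hn hnx
    refine deriv_mollifiedLog_rescale_mem_Icc hφ hsupp hφ0 hφ1 hδ hn ?_
    rw [div_lt_iff₀ hx] at hnx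
    rwa [div_lt_iff₀ hn, mul_comm]
  exact tendsto_of_tendsto_of_tendsto_of_le_of_le' tendsto_const_nhds hupper
    (hmem.mono fun _ h => h.1) (hmem.mono fun _ h => h.2)

end Rescale

lemma expNegInvGlue_mul_two_sub (x : ℝ) :
    expNegInvGlue (x * (2 - x)) = if 0 < x ∧ x < 2 then exp (1 / ((x - 1) ^ 2 - 1)) else 0 := by
  split_ifs with h
  · rw [expNegInvGlue, if_neg (not_le.2 (mul_pos h.1 (by linarith [h.2]))),
      show (x - 1) ^ 2 - 1 = -(x * (2 - x)) by ring, one_div, inv_neg]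
  · refine expNegInvGlue.zero_of_nonpos ?_
    rcases not_and_or.1 h with h | h <;> rw [not_lt] at h <;> nlinarith

theorem stmt_15 (c : ℝ)
    (ζ : ℝ → ℝ)
    (hζ : ∀ x : ℝ, ζ x =
      if 0 < x ∧ x < 2 then c * Real.exp (1 / ((x - 1) ^ 2 - 1)) else 0)
    (hnorm : ∫ x : ℝ, ζ x = 1)
    (ζn : ℕ → ℝ → ℝ) (hζn : ∀ n : ℕ, ∀ x : ℝ, ζn n x = (n : ℝ) * ζ ((n : ℝ) * x))
    (G : ℕ → ℝ → ℝ)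
    (hG : ∀ n : ℕ, ∀ x : ℝ,
      G n x = ∫ y : ℝ, (if 0 < y then Real.log y else 0) * ζn n (x - y)) :
    (∀ n : ℕ, 2 ≤ n → ∀ x : ℝ, x ≤ 0 → deriv (G n) x = 0) ∧
    (∃ C : ℝ, 0 < C ∧ ∀ n : ℕ, 2 ≤ n → ∀ x : ℝ, 0 < x →
      |deriv (G n) x| ≤ C * x⁻¹ * (1 + |Real.log x|)) ∧
    (∀ x : ℝ, 0 < x → Tendsto (fun n : ℕ => deriv (G n) x) atTop (nhds (1 / x))) := by
  have hζ_eq : ζ = fun x => c * expNegInvGlue (x * (2 - x)) := by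
    funext x
    rw [hζ, expNegInvGlue_mul_two_sub]
    split_ifs <;> simp
  have hζ_smooth : ContDiff ℝ 1 ζ :=
    hζ_eq ▸ contDiff_const.mul (expNegInvGlue.contDiff.comp (by fun_prop))
  have hζ_supp : support ζ ⊆ Ioo 0 2 := fun x hx =>
    by_contra fun h => hx (by rw [hζ, if_neg (show ¬(0 < x ∧ x < 2) from h)])
  have hc : 0 ≤ c := by
    by_contra! hc
    have : ∫ x, ζ x ≤ 0 := integral_nonpos fun x => by
      rw [hζ_eq]
      exact mul_nonpos_of_nonpos_of_nonneg hc.le (expNegInvGlue.nonneg _)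
    linarith
  have hζ_nonneg : 0 ≤ ζ := fun x => by
    rw [hζ_eq]
    exact mul_nonneg hc (expNegInvGlue.nonneg _)
  have hG_eq : ∀ n : ℕ, G n = mollifiedLog fun y => (n : ℝ) * ζ (n * y) := by
    intro n
    funext x
    rw [hG, mollifiedLog, convolution_mul]
    simp only [hζn, indicator_apply, mem_Ioi]
  obtain ⟨C, hC, hbound⟩ :=
    exists_abs_deriv_mollifiedLog_rescale_le hζ_smooth hζ_supp hζ_nonneg hnorm zero_le_two
  refine ⟨fun n hn x hx => ?_, ⟨C, hC, fun n hn x hx => ?_⟩, fun x hx => ?_⟩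
  · rw [hG_eq]
    exact deriv_mollifiedLog_of_nonpos (contDiff_rescale hζ_smooth n)
      (support_rescale_subset hζ_supp (by positivity)) hx
  · rw [hG_eq]
    exact hbound n (by positivity) x hx
  · simp_rw [hG_eq, one_div]
    exact (tendsto_deriv_mollifiedLog_rescale hζ_smooth hζ_supp hζ_nonneg hnorm zero_le_two
      hx).comp tendsto_natCast_atTop_atTop
end
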